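/- arXiv:1311.5392 — 3 statements merged into one kernel-verified Lean document; each statement's English description precedes it below -/
import Mathlib

section
/- Define P(A,B) = ( 𝓘₀²(A,B) + 𝓘₂²(A,B) ) / ( 2 𝓘₀²(A,B) ). Then for every A ∈ ℝ and B ≥ 0 one has 1/2 ≤ P(A,B) < 1, and P(A,0) = 1/2. -/
open MeasureTheory Set
open scoped ENNReal

/-- The Fermi integral of order `s`: `φ_s(x) = (1/Γ(s)) ∫₀^∞ t^{s-1}/(e^{t-x}+1) dt`. -/
noncomputable def fermi (s x : ℝ) : ℝ :=
  (1 / Real.Gamma s) * ∫ t in Set.Ioi (0 : ℝ), t ^ (s - 1) / (Real.exp (t - x) + 1)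

/-- `𝓘_N^s(A,B) = (1/π) ∫₀^π cos(Nθ) φ_s(A + B cos θ) dθ`. -/
noncomputable def calI (N : ℕ) (s A B : ℝ) : ℝ :=
  (1 / Real.pi) * ∫ θ in (0 : ℝ)..Real.pi, Real.cos (N * θ) * fermi s (A + B * Real.cos θ)
noncomputable def Ffun (x t : ℝ) : ℝ := (Real.exp (t - x) + 1)⁻¹

lemma Ffun_pos (x t : ℝ) : 0 < Ffun x t := by
  unfold Ffun; positivity

lemma Ffun_le_exp (x t : ℝ) : Ffun x t ≤ Real.exp x * Real.exp (-t) := by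
  unfold Ffun
  rw [← Real.exp_add]
  have h1 : Real.exp (x + -t) = (Real.exp (t - x))⁻¹ := by
    rw [← Real.exp_neg]; ring_nf
  rw [h1]
  have h2 : (0:ℝ) < Real.exp (t - x) := Real.exp_pos _
  apply inv_anti₀ h2
  linarith

lemma Ffun_cont (x : ℝ) : Continuous (Ffun x) := by
  unfold Ffun
  fun_prop (disch := intro t; positivity)

lemma Ffun_mono (t : ℝ) {x y : ℝ} (hxy : x ≤ y) : Ffun x t ≤ Ffun y t := by
  unfold Ffun
  have h2 : (0:ℝ) < Real.exp (t - y) := Real.exp_pos _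
  apply inv_anti₀ (by positivity)
  have := Real.exp_le_exp.2 (by linarith : t - y ≤ t - x)
  linarith

lemma intK (x : ℝ) : IntegrableOn (fun t => Ffun x t) (Ioi (0:ℝ)) := by
  have hG : IntegrableOn (fun t : ℝ => Real.exp x * (Real.exp (-t) * t ^ ((1:ℝ)-1))) (Ioi 0) :=
    (Real.GammaIntegral_convergent one_pos).const_mul _
  refine Integrable.mono' hG ((Ffun_cont x).aestronglyMeasurable) ?_
  filter_upwards [] with t
  rw [Real.norm_eq_abs, abs_of_pos (Ffun_pos x t)]
  simpa [Real.rpow_zero] using Ffun_le_exp x t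

lemma intH (x : ℝ) : IntegrableOn (fun t => t * Ffun x t) (Ioi (0:ℝ)) := by
  have hG : IntegrableOn (fun t : ℝ => Real.exp x * (Real.exp (-t) * t ^ ((2:ℝ)-1))) (Ioi 0) :=
    (Real.GammaIntegral_convergent two_pos).const_mul _
  refine Integrable.mono' hG (continuous_id.mul (Ffun_cont x)).aestronglyMeasurable ?_
  rw [ae_restrict_iff' measurableSet_Ioi]
  filter_upwards [] with t ht
  have ht' : (0:ℝ) < t := ht
  rw [Real.norm_eq_abs, abs_of_nonneg (mul_nonneg ht'.le (Ffun_pos x t).le)]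
  have h1 : t ^ ((2:ℝ)-1) = t := by norm_num
  rw [h1]
  have := Ffun_le_exp x t
  calc t * Ffun x t ≤ t * (Real.exp x * Real.exp (-t)) := by
        apply mul_le_mul_of_nonneg_left this ht'.le
    _ = Real.exp x * (Real.exp (-t) * t) := by ring

lemma fermi_two (x : ℝ) : fermi 2 x = ∫ t in Ioi (0:ℝ), t * Ffun x t := by
  unfold fermi Ffun
  rw [Real.Gamma_two, one_div_one, one_mul]
  congr 1
  ext t
  rw [div_eq_mul_inv]
  congr 1
  have h : (2:ℝ)-1 = 1 := by norm_num
  rw [h, Real.rpow_one]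

lemma fermi_pos (x : ℝ) : 0 < fermi 2 x := by
  rw [fermi_two]
  have h0 : (0:ℝ → ℝ) ≤ᶠ[ae (volume.restrict (Ioi 0))] fun t => t * Ffun x t := by
    rw [Filter.EventuallyLE, ae_restrict_iff' measurableSet_Ioi]
    filter_upwards [] with t ht
    exact mul_nonneg (le_of_lt ht) (Ffun_pos x t).le
  rw [setIntegral_pos_iff_support_of_nonneg_ae h0 (intH x)]
  have hsub : Ioi (0:ℝ) ⊆ Function.support (fun t => t * Ffun x t) ∩ Ioi 0 := by
      intro t ht
      refine ⟨?_, ht⟩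
      simp only [Function.mem_support]
      exact ne_of_gt (mul_pos (show (0:ℝ) < t from ht) (Ffun_pos x t))
  calc (0:ℝ≥0∞) < volume (Ioi (0:ℝ)) := by simp
      _ ≤ _ := measure_mono hsub

lemma fermi_mono : Monotone (fermi 2) := by
  intro x y hxy
  rw [fermi_two, fermi_two]
  refine setIntegral_mono_on (intH x) (intH y) measurableSet_Ioi ?_
  intro t ht
  exact mul_le_mul_of_nonneg_left (Ffun_mono t hxy) (le_of_lt ht)
noncomputable def Kfun (x : ℝ) : ℝ := ∫ t in Ioi (0:ℝ), Ffun x t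

lemma Kfun_mono : Monotone Kfun := by
  intro x y hxy
  exact setIntegral_mono_on (intK x) (intK y) measurableSet_Ioi (fun t _ => Ffun_mono t hxy)

lemma shiftIoi (g : ℝ → ℝ) (a d : ℝ) :
    (∫ s in Ioi a, g (s + d)) = ∫ t in Ioi (a + d), g t := by
  rw [← integral_indicator measurableSet_Ioi, ← integral_indicator measurableSet_Ioi]
  rw [← integral_add_right_eq_self (fun t => (Ioi (a+d)).indicator g t) d]
  congr 1
  ext s
  by_cases h : s ∈ Ioi a
  · rw [indicator_of_mem h, indicator_of_mem (by simp only [mem_Ioi] at h ⊢; linarith)]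
  · rw [indicator_of_notMem h, indicator_of_notMem (by simp only [mem_Ioi] at h ⊢; linarith)]

lemma intH' (x d : ℝ) : IntegrableOn (fun s => (s + d) * Ffun x s) (Ioi (0:ℝ)) := by
  have : (fun s => (s + d) * Ffun x s) = (fun s => s * Ffun x s + d * Ffun x s) := by
    ext s; ring
  rw [this]
  exact (intH x).add ((intK x).const_mul d)

lemma fermi_diff {x y : ℝ} (hxy : x < y) :
    fermi 2 y - fermi 2 x
      = (∫ s in Ioc (-(y-x)) 0, (s + (y-x)) * Ffun x s) + (y-x) * Kfun x := by
  set d := y - x with hd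
  have hd0 : 0 < d := by simp [hd]; linarith
  have h1 : fermi 2 y = ∫ s in Ioi (-d), (s + d) * Ffun x s := by
    rw [fermi_two]
    have hs := shiftIoi (fun t => t * Ffun y t) (-d) d
    simp only [neg_add_cancel] at hs
    rw [← hs]
    refine setIntegral_congr_fun measurableSet_Ioi ?_
    intro s _
    simp only
    have harg : Ffun y (s + d) = Ffun x s := by
      unfold Ffun; congr 2; rw [hd]; ring
    rw [harg]
  have hsplit : Ioc (-d) 0 ∪ Ioi (0:ℝ) = Ioi (-d) := Ioc_union_Ioi_eq_Ioi (by linarith)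
  have hIoc : IntegrableOn (fun s => (s + d) * Ffun x s) (Ioc (-d) 0) :=
    ((continuous_id.add continuous_const).mul (Ffun_cont x)).integrableOn_Ioc
  have h2 : (∫ s in Ioi (-d), (s + d) * Ffun x s)
      = (∫ s in Ioc (-d) 0, (s + d) * Ffun x s) + ∫ s in Ioi (0:ℝ), (s + d) * Ffun x s := by
    rw [← hsplit, setIntegral_union (Ioc_disjoint_Ioi le_rfl) measurableSet_Ioi hIoc (intH' x d)]
  have h3 : (∫ s in Ioi (0:ℝ), (s + d) * Ffun x s) = fermi 2 x + d * Kfun x := by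
    rw [fermi_two]
    unfold Kfun
    rw [← integral_const_mul, ← integral_add (intH x) ((intK x).const_mul d)]
    congr 1; ext s; ring
  rw [h1, h2, h3]; ring

lemma Kfun_diff {x y : ℝ} (hxy : x < y) :
    Kfun y = (∫ s in Ioc (-(y-x)) 0, Ffun x s) + Kfun x := by
  set d := y - x with hd
  have hd0 : 0 < d := by simp [hd]; linarith
  have h1 : Kfun y = ∫ s in Ioi (-d), Ffun x s := by
    unfold Kfun
    have hs := shiftIoi (fun t => Ffun y t) (-d) d
    simp only [neg_add_cancel] at hs
    rw [← hs]
    refine setIntegral_congr_fun measurableSet_Ioi ?_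
    intro s _
    simp only
    unfold Ffun; congr 2; rw [hd]; ring
  have hsplit : Ioc (-d) 0 ∪ Ioi (0:ℝ) = Ioi (-d) := Ioc_union_Ioi_eq_Ioi (by linarith)
  have hIoc : IntegrableOn (Ffun x) (Ioc (-d) 0) := (Ffun_cont x).integrableOn_Ioc
  rw [h1, ← hsplit, setIntegral_union (Ioc_disjoint_Ioi le_rfl) measurableSet_Ioi hIoc (intK x)]
  rfl

lemma slope_le {x y : ℝ} (hxy : x < y) :
    (y - x) * Kfun x ≤ fermi 2 y - fermi 2 x ∧ fermi 2 y - fermi 2 x ≤ (y - x) * Kfun y := by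
  have hd0 : 0 < y - x := sub_pos.2 hxy
  have hIoc : IntegrableOn (fun s => (s + (y-x)) * Ffun x s) (Ioc (-(y-x)) 0) :=
    ((continuous_id.add continuous_const).mul (Ffun_cont x)).integrableOn_Ioc
  have hIocF : IntegrableOn (Ffun x) (Ioc (-(y-x)) 0) := (Ffun_cont x).integrableOn_Ioc
  have hlow : 0 ≤ ∫ s in Ioc (-(y-x)) 0, (s + (y-x)) * Ffun x s := by
    apply setIntegral_nonneg measurableSet_Ioc
    intro s hs
    exact mul_nonneg (by have := hs.1; linarith) (Ffun_pos x s).le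
  have hup : (∫ s in Ioc (-(y-x)) 0, (s + (y-x)) * Ffun x s)
      ≤ (y-x) * ∫ s in Ioc (-(y-x)) 0, Ffun x s := by
    rw [← integral_const_mul]
    apply setIntegral_mono_on hIoc (hIocF.const_mul (y-x)) measurableSet_Ioc
    intro s hs
    apply mul_le_mul_of_nonneg_right _ (Ffun_pos x s).le
    have := hs.2; linarith
  constructor
  · rw [fermi_diff hxy]; linarith
  · rw [fermi_diff hxy, Kfun_diff hxy]
    rw [mul_add]
    linarith

lemma fermi_convex : ConvexOn ℝ univ (fermi 2) := by
  rw [convexOn_iff_slope_mono_adjacent]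
  refine ⟨convex_univ, ?_⟩
  intro x y z _ _ hxy hyz
  have h1 := (slope_le hxy).2
  have h2 := (slope_le hyz).1
  rw [div_le_div_iff₀ (by linarith) (by linarith)]
  have hKy := Kfun_mono (le_refl y)
  nlinarith [Kfun_mono (le_refl y), sub_pos.2 hxy, sub_pos.2 hyz,
    mul_le_mul_of_nonneg_left h2 (le_of_lt (sub_pos.2 hxy)),
    mul_le_mul_of_nonneg_left h1 (le_of_lt (sub_pos.2 hyz))]

lemma gmono (A B : ℝ) {c c' : ℝ} (hc : 0 ≤ c) (hcc : c ≤ c') :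
    fermi 2 (A + B*c) + fermi 2 (A - B*c) ≤ fermi 2 (A + B*c') + fermi 2 (A - B*c') := by
  rcases eq_or_lt_of_le (hc.trans hcc) with h0 | h0
  · have : c = 0 := le_antisymm (by linarith) hc
    rw [this, ← h0]
  · set lam := (c' + c) / (2 * c') with hlam
    have h1 : 0 ≤ lam := by positivity
    have h2 : 0 ≤ 1 - lam := by
      rw [hlam]; rw [sub_nonneg, div_le_one (by linarith)]; linarith
    have hsum : lam + (1 - lam) = 1 := by ring
    have key1 := fermi_convex.2 (mem_univ (A + B*c')) (mem_univ (A - B*c')) h1 h2 hsum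
    have key2 := fermi_convex.2 (mem_univ (A - B*c')) (mem_univ (A + B*c')) h1 h2 hsum
    have e1 : lam • (A + B*c') + (1 - lam) • (A - B*c') = A + B*c := by
      simp only [smul_eq_mul, hlam]; field_simp; ring
    have e2 : lam • (A - B*c') + (1 - lam) • (A + B*c') = A - B*c := by
      simp only [smul_eq_mul, hlam]; field_simp; ring
    rw [e1] at key1
    rw [e2] at key2
    simp only [smul_eq_mul] at key1 key2
    nlinarith [key1, key2]

lemma fermi_meas : Measurable (fermi 2) := fermi_mono.measurable

lemma fermi_comp_integrable (A B a b : ℝ) :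
    IntervalIntegrable (fun θ => fermi 2 (A + B * Real.cos θ)) volume a b := by
  have hmeas : Measurable fun θ => fermi 2 (A + B * Real.cos θ) :=
    fermi_meas.comp (by fun_prop)
  apply IntervalIntegrable.mono_fun' (g := fun _ => fermi 2 (A + |B|))
    intervalIntegrable_const hmeas.aestronglyMeasurable
  filter_upwards [] with θ
  rw [Real.norm_eq_abs, abs_of_pos (fermi_pos _)]
  apply fermi_mono
  have h1 : B * Real.cos θ ≤ |B| := by
    calc B * Real.cos θ ≤ |B * Real.cos θ| := le_abs_self _
      _ = |B| * |Real.cos θ| := abs_mul _ _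
      _ ≤ |B| * 1 := by
          apply mul_le_mul_of_nonneg_left (Real.abs_cos_le_one θ) (abs_nonneg B)
      _ = |B| := mul_one _
  linarith

lemma cos_integrable (c a b : ℝ) (f : ℝ → ℝ) (hmeas : Measurable f)
    (hf : IntervalIntegrable f volume a b) :
    IntervalIntegrable (fun θ => Real.cos (c * θ) * f θ) volume a b := by
  have hm : Measurable fun θ => Real.cos (c * θ) * f θ := by
    exact ((Real.continuous_cos.comp (continuous_const.mul continuous_id)).measurable).mul hmeas
  apply IntervalIntegrable.mono_fun' (g := fun θ => |f θ|) hf.abs hm.aestronglyMeasurable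
  filter_upwards [] with θ
  rw [Real.norm_eq_abs, abs_mul]
  calc |Real.cos (c*θ)| * |f θ| ≤ 1 * |f θ| :=
        mul_le_mul_of_nonneg_right (Real.abs_cos_le_one _) (abs_nonneg _)
    _ = |f θ| := one_mul _

lemma integral_cos_two : (∫ θ in (0:ℝ)..Real.pi, Real.cos (2 * θ)) = 0 := by
  rw [intervalIntegral.integral_comp_mul_left (a := 0) (b := Real.pi)
    (fun u => Real.cos u) (two_ne_zero (α := ℝ))]
  rw [integral_cos]
  norm_num [Real.sin_two_pi]

lemma gabs (A B θ : ℝ) :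
    fermi 2 (A + B*Real.cos θ) + fermi 2 (A - B*Real.cos θ)
      = fermi 2 (A + B*|Real.cos θ|) + fermi 2 (A - B*|Real.cos θ|) := by
  rcases abs_cases (Real.cos θ) with ⟨h1, _⟩ | ⟨h1, _⟩
  · rw [h1]
  · rw [h1, show A + B * -Real.cos θ = A - B * Real.cos θ by ring,
      show A - B * -Real.cos θ = A + B * Real.cos θ by ring, add_comm]

lemma key_pointwise (A B : ℝ) (θ : ℝ) :
    0 ≤ Real.cos (2*θ) *
      ((fermi 2 (A + B*Real.cos θ) + fermi 2 (A - B*Real.cos θ))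
        - (fermi 2 (A + B*Real.sqrt (1/2)) + fermi 2 (A - B*Real.sqrt (1/2)))) := by
  set r := Real.sqrt (1/2) with hr
  have hr0 : 0 ≤ r := Real.sqrt_nonneg _
  have hc2 : Real.cos (2*θ) = 2 * Real.cos θ ^ 2 - 1 := Real.cos_two_mul θ
  rw [gabs]
  have habs0 : 0 ≤ |Real.cos θ| := abs_nonneg _
  by_cases h : 1/2 ≤ Real.cos θ ^ 2
  · have hle : r ≤ |Real.cos θ| := by
      rw [hr, ← Real.sqrt_sq_eq_abs]
      exact Real.sqrt_le_sqrt h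
    have := gmono A B hr0 hle
    apply mul_nonneg (by rw [hc2]; linarith)
    linarith
  · push_neg at h
    have hle : |Real.cos θ| ≤ r := by
      rw [hr, ← Real.sqrt_sq_eq_abs]
      exact Real.sqrt_le_sqrt (le_of_lt h)
    have hg := gmono A B habs0 hle
    have hcc : Real.cos (2*θ) ≤ 0 := by rw [hc2]; nlinarith
    nlinarith [mul_nonneg (neg_nonneg.2 hcc) (sub_nonneg.2 hg)]

lemma subst_pi (A B : ℝ) :
    (∫ θ in (0:ℝ)..Real.pi, Real.cos (2*θ) * fermi 2 (A + B * Real.cos θ))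
      = ∫ θ in (0:ℝ)..Real.pi, Real.cos (2*θ) * fermi 2 (A - B * Real.cos θ) := by
  have h := intervalIntegral.integral_comp_sub_left (a := 0) (b := Real.pi)
    (fun θ => Real.cos (2*θ) * fermi 2 (A + B * Real.cos θ)) Real.pi
  simp only [sub_self, sub_zero] at h
  rw [← h]
  apply intervalIntegral.integral_congr
  intro θ _
  simp only
  have h1 : Real.cos (Real.pi - θ) = -Real.cos θ := Real.cos_pi_sub θ
  have h2 : Real.cos (2 * (Real.pi - θ)) = Real.cos (2*θ) := by
    rw [show 2 * (Real.pi - θ) = 2*Real.pi - 2*θ by ring, Real.cos_sub]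
    simp [Real.cos_two_pi, Real.sin_two_pi]
  rw [h1, h2, show A + B * -Real.cos θ = A - B * Real.cos θ by ring]

lemma J_nonneg (A B : ℝ) :
    0 ≤ ∫ θ in (0:ℝ)..Real.pi, Real.cos (2*θ) * fermi 2 (A + B * Real.cos θ) := by
  set C := fermi 2 (A + B*Real.sqrt (1/2)) + fermi 2 (A - B*Real.sqrt (1/2)) with hC
  have hmeasp : Measurable fun θ => fermi 2 (A + B * Real.cos θ) :=
    fermi_meas.comp (by fun_prop)
  have hmeasm : Measurable fun θ => fermi 2 (A - B * Real.cos θ) := by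
    have : (fun θ => fermi 2 (A - B * Real.cos θ))
        = fun θ => fermi 2 (A + (-B) * Real.cos θ) := by ext θ; ring_nf
    rw [this]; exact fermi_meas.comp (by fun_prop)
  have hintm' : IntervalIntegrable (fun θ => fermi 2 (A + (-B) * Real.cos θ)) volume 0 Real.pi :=
    fermi_comp_integrable A (-B) 0 Real.pi
  have hintm : IntervalIntegrable (fun θ => fermi 2 (A - B * Real.cos θ)) volume 0 Real.pi := by
    have : (fun θ => fermi 2 (A - B * Real.cos θ))
        = fun θ => fermi 2 (A + (-B) * Real.cos θ) := by ext θ; ring_nf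
    rw [this]; exact hintm'
  have hip : IntervalIntegrable (fun θ => Real.cos (2*θ) * fermi 2 (A + B * Real.cos θ))
      volume 0 Real.pi := cos_integrable 2 0 Real.pi _ hmeasp (fermi_comp_integrable A B 0 Real.pi)
  have him : IntervalIntegrable (fun θ => Real.cos (2*θ) * fermi 2 (A - B * Real.cos θ))
      volume 0 Real.pi := cos_integrable 2 0 Real.pi _ hmeasm hintm
  have hsum : (∫ θ in (0:ℝ)..Real.pi, Real.cos (2*θ) * fermi 2 (A + B * Real.cos θ))
      + (∫ θ in (0:ℝ)..Real.pi, Real.cos (2*θ) * fermi 2 (A - B * Real.cos θ))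
      = ∫ θ in (0:ℝ)..Real.pi, Real.cos (2*θ) *
          ((fermi 2 (A + B*Real.cos θ) + fermi 2 (A - B*Real.cos θ))) := by
    rw [← intervalIntegral.integral_add hip him]
    apply intervalIntegral.integral_congr
    intro θ _; simp only; ring
  have hCint : IntervalIntegrable (fun θ => Real.cos (2*θ) * C) volume 0 Real.pi :=
    (Continuous.intervalIntegrable (by fun_prop) 0 Real.pi)
  have hsplit : (∫ θ in (0:ℝ)..Real.pi, Real.cos (2*θ) *
          ((fermi 2 (A + B*Real.cos θ) + fermi 2 (A - B*Real.cos θ))))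
      = (∫ θ in (0:ℝ)..Real.pi, Real.cos (2*θ) *
          ((fermi 2 (A + B*Real.cos θ) + fermi 2 (A - B*Real.cos θ)) - C))
        + ∫ θ in (0:ℝ)..Real.pi, Real.cos (2*θ) * C := by
    rw [← intervalIntegral.integral_add ?_ hCint]
    · apply intervalIntegral.integral_congr
      intro θ _; simp only; ring
    · have heq : (fun θ => Real.cos (2*θ) *
          ((fermi 2 (A + B*Real.cos θ) + fermi 2 (A - B*Real.cos θ)) - C))
          = fun θ => (Real.cos (2*θ) * fermi 2 (A + B*Real.cos θ)
              + Real.cos (2*θ) * fermi 2 (A - B*Real.cos θ)) - Real.cos (2*θ) * C := by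
        ext θ; ring
      rw [heq]
      exact (hip.add him).sub hCint
  have hJJ := subst_pi A B
  have hconst : (∫ θ in (0:ℝ)..Real.pi, Real.cos (2*θ) * C) = 0 := by
    rw [intervalIntegral.integral_mul_const, integral_cos_two, zero_mul]
  have hnn : 0 ≤ ∫ θ in (0:ℝ)..Real.pi, Real.cos (2*θ) *
      ((fermi 2 (A + B*Real.cos θ) + fermi 2 (A - B*Real.cos θ)) - C) := by
    apply intervalIntegral.integral_nonneg Real.pi_pos.le
    intro θ _
    exact key_pointwise A B θ
  linarith [hsum, hsplit]

lemma calI0_eq (A B : ℝ) : calI 0 2 A B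
    = (1/Real.pi) * ∫ θ in (0:ℝ)..Real.pi, fermi 2 (A + B * Real.cos θ) := by
  unfold calI
  congr 1
  apply intervalIntegral.integral_congr
  intro θ _
  simp

lemma calI2_eq (A B : ℝ) : calI 2 2 A B
    = (1/Real.pi) * ∫ θ in (0:ℝ)..Real.pi, Real.cos (2*θ) * fermi 2 (A + B * Real.cos θ) := by
  unfold calI
  norm_num

lemma calI2_nonneg (A B : ℝ) : 0 ≤ calI 2 2 A B := by
  rw [calI2_eq]
  exact mul_nonneg (by positivity) (J_nonneg A B)

lemma calI0_pos (A B : ℝ) (hB : 0 ≤ B) : 0 < calI 0 2 A B := by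
  rw [calI0_eq]
  apply mul_pos (by positivity)
  have hmono : ∀ θ ∈ Icc (0:ℝ) Real.pi,
      (fun _ : ℝ => fermi 2 (A - B)) θ ≤ fermi 2 (A + B * Real.cos θ) := by
    intro θ _
    apply fermi_mono
    have h1 : -1 ≤ Real.cos θ := Real.neg_one_le_cos θ
    nlinarith
  have h := intervalIntegral.integral_mono_on Real.pi_pos.le
    intervalIntegrable_const (fermi_comp_integrable A B 0 Real.pi) hmono
  rw [intervalIntegral.integral_const] at h
  have h2 : 0 < (Real.pi - 0) • fermi 2 (A - B) := by
    rw [smul_eq_mul]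
    have := fermi_pos (A - B)
    have := Real.pi_pos
    nlinarith
  linarith

lemma calI2_lt (A B : ℝ) : calI 2 2 A B < calI 0 2 A B := by
  rw [calI0_eq, calI2_eq]
  have hmeasp : Measurable fun θ => fermi 2 (A + B * Real.cos θ) :=
    fermi_meas.comp (by fun_prop)
  have hf := fermi_comp_integrable A B 0 Real.pi
  have hip := cos_integrable 2 0 Real.pi _ hmeasp hf
  have hdiff : 0 < ∫ θ in (0:ℝ)..Real.pi,
      (fermi 2 (A + B*Real.cos θ) - Real.cos (2*θ) * fermi 2 (A + B*Real.cos θ)) := by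
    apply intervalIntegral.intervalIntegral_pos_of_pos_on (hf.sub hip) _ Real.pi_pos
    intro θ hθ
    have hs : 0 < Real.sin θ := Real.sin_pos_of_pos_of_lt_pi hθ.1 hθ.2
    have hc2 : Real.cos (2*θ) = 1 - 2*Real.sin θ^2 := by
      have e1 := Real.cos_two_mul θ
      have e2 := Real.sin_sq_add_cos_sq θ
      linarith
    have hfp := fermi_pos (A + B*Real.cos θ)
    rw [hc2]
    nlinarith [mul_pos (mul_pos hs hs) hfp]
  rw [intervalIntegral.integral_sub hf hip] at hdiff
  have hpi : 0 < 1/Real.pi := by positivity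
  apply mul_lt_mul_of_pos_left _ hpi
  linarith

lemma calI2_zero (A : ℝ) : calI 2 2 A 0 = 0 := by
  rw [calI2_eq]
  have h : (∫ θ in (0:ℝ)..Real.pi, Real.cos (2*θ) * fermi 2 (A + 0 * Real.cos θ))
      = ∫ θ in (0:ℝ)..Real.pi, Real.cos (2*θ) * fermi 2 A := by
    apply intervalIntegral.integral_congr; intro θ _; norm_num
  rw [h, intervalIntegral.integral_mul_const, integral_cos_two, zero_mul, mul_zero]

/-- With `P(A,B) = (𝓘₀² + 𝓘₂²)/(2𝓘₀²)`, one has `1/2 ≤ P < 1` and `P(A,0) = 1/2`. -/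
theorem P_bounds (A B : ℝ) (hB : 0 ≤ B) :
    1 / 2 ≤ (calI 0 2 A B + calI 2 2 A B) / (2 * calI 0 2 A B) ∧
    (calI 0 2 A B + calI 2 2 A B) / (2 * calI 0 2 A B) < 1 ∧
    (calI 0 2 A 0 + calI 2 2 A 0) / (2 * calI 0 2 A 0) = 1 / 2 := by
  have h0 := calI0_pos A B hB
  have h2 := calI2_nonneg A B
  have h21 := calI2_lt A B
  have h0' := calI0_pos A 0 le_rfl
  have h2' := calI2_zero A
  refine ⟨?_, ?_, ?_⟩
  · rw [div_le_div_iff₀ two_pos (by linarith)]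
    linarith
  · rw [div_lt_one (by linarith)]
    linarith
  · have hne : calI 0 2 A 0 ≠ 0 := ne_of_gt h0'
    rw [h2', add_zero]
    rw [div_eq_div_iff (by linarith : (2:ℝ) * calI 0 2 A 0 ≠ 0) (by norm_num : (2:ℝ) ≠ 0)]
    ring
end

section
/- For every x ∈ ℝ one has φ₁(x) < φ₂(x), i.e. ∫₀^∞ 1/(e^{t−x}+1) dt < ∫₀^∞ t/(e^{t−x}+1) dt. -/
open MeasureTheory Set

/-!
In fact `φ_s < φ_{s+1}` for every `s > 0`. Write `1/(e^{t-x}+1) = e^{-t} g(t)` with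
`g(t) = 1/(e^{-t}+e^{-x})` strictly increasing; then
`Γ(s+1) (φ_{s+1}(x) - φ_s(x)) = ∫₀^∞ (t - s) t^{s-1} e^{-t} g(t) dt`.
The weight `(t - s) t^{s-1} e^{-t}` has integral `Γ(s+1) - s Γ(s) = 0`, so `g(t)` may be replaced
by `g(t) - g(s)`, and then the integrand is positive for `t ≠ s`.
-/

open Real

lemma strictMono_inv_exp_neg_add (c : ℝ) : StrictMono fun t => (exp (-t) + exp c)⁻¹ := by
  intro t u htu
  dsimp only
  gcongr

lemma inv_exp_sub_add_one (x t : ℝ) :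
    (exp (t - x) + 1)⁻¹ = exp (-t) * (exp (-t) + exp (-x))⁻¹ := by
  rw [exp_sub, exp_neg, exp_neg]
  field_simp
  ring

lemma fermi_eq_inv_Gamma_mul_integral (s x : ℝ) :
    fermi s x =
      (Gamma s)⁻¹ * ∫ t in Ioi 0, exp (-t) * t ^ (s - 1) * (exp (-t) + exp (-x))⁻¹ := by
  rw [fermi, one_div]
  congr 2 with t
  rw [div_eq_mul_inv, inv_exp_sub_add_one]
  ring

lemma exp_neg_mul_rpow_add_one_sub_one {t : ℝ} (ht : 0 < t) (s : ℝ) :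
    exp (-t) * t ^ (s + 1 - 1) = t * (exp (-t) * t ^ (s - 1)) := by
  rw [add_sub_right_comm, rpow_add_one ht.ne']
  ring

lemma integrableOn_sub_mul_gamma_integrand {s : ℝ} (hs : 0 < s) :
    IntegrableOn (fun t => (t - s) * (exp (-t) * t ^ (s - 1))) (Ioi 0) :=
  ((GammaIntegral_convergent (s := s + 1) (by linarith)).sub
    ((GammaIntegral_convergent hs).const_mul s)).congr_fun
    (fun t (ht : 0 < t) => by
      simp only [Pi.sub_apply, exp_neg_mul_rpow_add_one_sub_one ht]
      ring)
    measurableSet_Ioi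

lemma integral_gamma_integrand_add_one_sub_mul {s : ℝ} (hs : 0 < s) {h : ℝ → ℝ} {C : ℝ}
    (hm : AEStronglyMeasurable h) (hC : ∀ t, ‖h t‖ ≤ C) :
    (∫ t in Ioi 0, exp (-t) * t ^ (s + 1 - 1) * h t)
        - s * ∫ t in Ioi 0, exp (-t) * t ^ (s - 1) * h t
      = ∫ t in Ioi 0, (t - s) * (exp (-t) * t ^ (s - 1)) * h t := by
  have hint : ∀ {r : ℝ}, 0 < r →
      IntegrableOn (fun t => exp (-t) * t ^ (r - 1) * h t) (Ioi 0) :=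
    fun hr => (GammaIntegral_convergent hr).mul_bdd hm.restrict (ae_of_all _ hC)
  rw [← integral_const_mul,
    ← integral_sub (hint (r := s + 1) (by linarith)) ((hint hs).const_mul s)]
  refine setIntegral_congr_fun measurableSet_Ioi fun t (ht : 0 < t) => ?_
  rw [exp_neg_mul_rpow_add_one_sub_one ht]
  ring

lemma setIntegral_Ioi_pos_of_strictMono {w g : ℝ → ℝ} {a : ℝ}
    (hw : ∀ t ∈ Ioi 0, 0 < w t) (hg : StrictMono g)
    (hmoment : ∫ t in Ioi 0, (t - a) * w t = 0)
    (hint : IntegrableOn (fun t => (t - a) * w t) (Ioi 0))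
    (hintg : IntegrableOn (fun t => (t - a) * w t * g t) (Ioi 0)) :
    0 < ∫ t in Ioi 0, (t - a) * w t * g t := by
  have hsign : ∀ t, 0 ≤ (t - a) * (g t - g a) := by
    intro t
    rcases le_total t a with hta | hta
    · exact mul_nonneg_of_nonpos_of_nonpos (by linarith) (by linarith [hg.monotone hta])
    · exact mul_nonneg (by linarith) (by linarith [hg.monotone hta])
  have hintg' : IntegrableOn (fun t => (t - a) * w t * (g t - g a)) (Ioi 0) :=
    (hintg.sub (hint.mul_const (g a))).congr_fun
      (fun t _ => by simp only [Pi.sub_apply]; ring) measurableSet_Ioi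
  have hsplit : ∫ t in Ioi 0, (t - a) * w t * g t
      = ∫ t in Ioi 0, (t - a) * w t * (g t - g a) := by
    have := integral_sub hintg (hint.mul_const (g a))
    rw [integral_mul_const, hmoment, zero_mul, sub_zero] at this
    rw [← this]
    congr with t
    ring
  rw [hsplit, setIntegral_pos_iff_support_of_nonneg_ae _ hintg']
  · refine lt_of_lt_of_le (by simp : 0 < volume (Ioi (max a 0))) (measure_mono fun t ht => ?_)
    have hat : a < t := lt_of_le_of_lt (le_max_left _ _) ht
    have h0t : 0 < t := lt_of_le_of_lt (le_max_right _ _) ht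
    exact ⟨(mul_pos (mul_pos (sub_pos.2 hat) (hw t h0t)) (sub_pos.2 (hg hat))).ne', h0t⟩
  · filter_upwards [ae_restrict_mem measurableSet_Ioi] with t ht
    have := mul_nonneg (hw t ht).le (hsign t)
    simp only [Pi.zero_apply]
    nlinarith

lemma fermi_lt_fermi_add_one {s : ℝ} (hs : 0 < s) (x : ℝ) : fermi s x < fermi (s + 1) x := by
  set g : ℝ → ℝ := fun t => (exp (-t) + exp (-x))⁻¹
  have hg : StrictMono g := strictMono_inv_exp_neg_add (-x)
  have hgC : ∀ t, ‖g t‖ ≤ exp x := fun t => by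
    rw [norm_inv, Real.norm_of_nonneg (by positivity)]
    refine inv_le_of_inv_le₀ (exp_pos x) ?_
    rw [← exp_neg]
    linarith [exp_pos (-t)]
  have hgm : AEStronglyMeasurable g := hg.monotone.measurable.aestronglyMeasurable
  have hmoment := integral_gamma_integrand_add_one_sub_mul hs (h := fun _ => 1)
    aestronglyMeasurable_const (fun _ => norm_one.le)
  simp only [mul_one] at hmoment
  rw [← Gamma_eq_integral hs, ← Gamma_eq_integral (s := s + 1) (by linarith),
    Gamma_add_one hs.ne', sub_self] at hmoment
  have hpos := setIntegral_Ioi_pos_of_strictMono (fun t (ht : 0 < t) => by positivity) hg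
    hmoment.symm (integrableOn_sub_mul_gamma_integrand hs)
    ((integrableOn_sub_mul_gamma_integrand hs).mul_bdd hgm.restrict (ae_of_all _ hgC))
  rw [← integral_gamma_integrand_add_one_sub_mul hs hgm hgC] at hpos
  have hΓ := Gamma_pos_of_pos hs
  rw [← sub_pos, fermi_eq_inv_Gamma_mul_integral, fermi_eq_inv_Gamma_mul_integral,
    Gamma_add_one hs.ne',
    show (Gamma s)⁻¹ = (s * Gamma s)⁻¹ * s by field_simp, mul_assoc, ← mul_sub]
  exact mul_pos (inv_pos.2 (mul_pos hs hΓ)) hpos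

/-- `φ₁(x) < φ₂(x)` for every real `x`. -/
theorem fermi_one_lt_fermi_two (x : ℝ) : fermi 1 x < fermi 2 x :=
  (fermi_lt_fermi_add_one one_pos x).trans_eq (by norm_num)
end

section
/- As ψ → 0⁺ one has 𝓕₁²(ψ)/𝓕₀²(ψ) = ψ + O(ψ³) and ( 𝓕₀²(ψ) + 𝓕₂²(ψ) ) / ( 2 𝓕₀²(ψ) ) = 1/2 + ψ²/8 + O(ψ⁴). -/
open MeasureTheory Set Filter Asymptotics

/-- `C(ψ) = π` for `0 ≤ ψ ≤ π/4`, `C(ψ) = arccos(-cot ψ)` for `π/4 < ψ < 3π/4`. -/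
noncomputable def Cpsi (ψ : ℝ) : ℝ :=
  if ψ ≤ Real.pi / 4 then Real.pi else Real.arccos (-(Real.cos ψ / Real.sin ψ))

/-- `𝓕_N^s(ψ) = (1/(πΓ(s+1))) ∫₀^{C(ψ)} cos(Nθ)(cos ψ + sin ψ cos θ)^s dθ`. -/
noncomputable def calF (N : ℕ) (s ψ : ℝ) : ℝ :=
  (1 / (Real.pi * Real.Gamma (s + 1))) *
    ∫ θ in (0 : ℝ)..Cpsi ψ, Real.cos (N * θ) * (Real.cos ψ + Real.sin ψ * Real.cos θ) ^ s

/-- `u(ψ) = 𝓕₁²(ψ)/𝓕₀²(ψ)`. -/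
noncomputable def uFun (ψ : ℝ) : ℝ := calF 1 2 ψ / calF 0 2 ψ

/-- `Y(ψ) = (𝓕₀²(ψ)+𝓕₂²(ψ))/(2𝓕₀²(ψ))`. -/
noncomputable def Yfun (ψ : ℝ) : ℝ := (calF 0 2 ψ + calF 2 2 ψ) / (2 * calF 0 2 ψ)

/-- `Z(ψ) = (𝓕₀¹(ψ)-𝓕₂¹(ψ))/(2√(2𝓕₀²(ψ)))`. -/
noncomputable def Zfun (ψ : ℝ) : ℝ :=
  (calF 0 1 ψ - calF 2 1 ψ) / (2 * Real.sqrt (2 * calF 0 2 ψ))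

/-- `Z_⊥(ψ) = (𝓕₀¹(ψ)+𝓕₂¹(ψ))/(2√(2𝓕₀²(ψ)))`. -/
noncomputable def Zperp (ψ : ℝ) : ℝ :=
  (calF 0 1 ψ + calF 2 1 ψ) / (2 * Real.sqrt (2 * calF 0 2 ψ))

/-!
For `ψ ≤ π/4` the integrals run over `[0, π]`. Writing `cos (Nθ) (a + b cos θ)²` as a cosine
polynomial `∑ c_k cos (kθ)` and using `∫₀^π cos (kθ) dθ = 0` for `k ≥ 1` gives the closed forms
`𝓕₀² = (1 - sin²ψ / 2) / 2`, `𝓕₁² = sin ψ cos ψ / 2` and `𝓕₂² = sin²ψ / 8`. Both ratios are then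
explicit, with denominator `1 - sin²ψ / 2 ≥ 1/2`, and the expansions follow from
`|sin x - x| ≤ |x|³ / 6` and `|sin x| ≤ |x|`.
-/

open Real Topology

lemma integral_cos_nat_mul_zero_pi (k : ℕ) :
    ∫ θ in (0 : ℝ)..π, cos (k * θ) = if k = 0 then π else 0 := by
  split_ifs with hk
  · simp [hk]
  · have hk' : (k : ℝ) ≠ 0 := Nat.cast_ne_zero.mpr hk
    simp [intervalIntegral.integral_comp_mul_left (fun x => cos x) hk', sin_nat_mul_pi]

lemma integral_cosine_poly_zero_pi {n : ℕ} (c : Fin (n + 1) → ℝ) :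
    ∫ θ in (0 : ℝ)..π, ∑ k, c k * cos (k * θ) = π * c 0 := by
  rw [intervalIntegral.integral_finsetSum
    fun k _ => (by fun_prop : Continuous _).intervalIntegrable _ _]
  simp_rw [intervalIntegral.integral_const_mul, integral_cos_nat_mul_zero_pi,
    Fin.val_eq_zero_iff]
  simp [mul_comm]

lemma cos_four_mul (x : ℝ) : cos (4 * x) = 8 * cos x ^ 4 - 8 * cos x ^ 2 + 1 := by
  rw [show 4 * x = 2 * (2 * x) by ring, cos_two_mul, cos_two_mul]; ring

lemma integral_sq_add_mul_cos (a b : ℝ) :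
    ∫ θ in (0 : ℝ)..π, (a + b * cos θ) ^ 2 = π * (a ^ 2 + b ^ 2 / 2) := by
  have h (θ : ℝ) : (a + b * cos θ) ^ 2 =
      ∑ k, ![a ^ 2 + b ^ 2 / 2, 2 * a * b, b ^ 2 / 2] k * cos (k * θ) := by
    norm_num [Fin.sum_univ_succ, cos_two_mul]
    ring
  simp [h, integral_cosine_poly_zero_pi]

lemma integral_cos_mul_sq_add_mul_cos (a b : ℝ) :
    ∫ θ in (0 : ℝ)..π, cos θ * (a + b * cos θ) ^ 2 = π * (a * b) := by
  have h (θ : ℝ) : cos θ * (a + b * cos θ) ^ 2 =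
      ∑ k, ![a * b, a ^ 2 + 3 * b ^ 2 / 4, a * b, b ^ 2 / 4] k * cos (k * θ) := by
    norm_num [Fin.sum_univ_succ, cos_two_mul, cos_three_mul]
    ring
  simp [h, integral_cosine_poly_zero_pi]

lemma integral_cos_two_mul_sq_add_mul_cos (a b : ℝ) :
    ∫ θ in (0 : ℝ)..π, cos (2 * θ) * (a + b * cos θ) ^ 2 = π * (b ^ 2 / 4) := by
  have h (θ : ℝ) : cos (2 * θ) * (a + b * cos θ) ^ 2 =
      ∑ k, ![b ^ 2 / 4, a * b, a ^ 2 + b ^ 2 / 2, a * b, b ^ 2 / 4] k * cos (k * θ) := by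
    norm_num [Fin.sum_univ_succ, cos_two_mul, cos_three_mul, cos_four_mul]
    ring
  simp [h, integral_cosine_poly_zero_pi]

lemma calF_two_eq_integral_sq (N : ℕ) {ψ : ℝ} (hψ : ψ ≤ π / 4) :
    calF N 2 ψ = (2 * π)⁻¹ * ∫ θ in (0 : ℝ)..π, cos (N * θ) * (cos ψ + sin ψ * cos θ) ^ 2 := by
  have hΓ : Gamma (2 + 1) = 2 := by
    rw [show (2 : ℝ) + 1 = (2 : ℕ) + 1 by norm_num, Gamma_nat_eq_factorial]; norm_num
  simp only [calF, Cpsi, if_pos hψ, hΓ, rpow_two]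
  ring

lemma calF_zero_two {ψ : ℝ} (hψ : ψ ≤ π / 4) : calF 0 2 ψ = (1 - sin ψ ^ 2 / 2) / 2 := by
  rw [calF_two_eq_integral_sq 0 hψ]
  simp only [CharP.cast_eq_zero, zero_mul, cos_zero, one_mul, integral_sq_add_mul_cos, cos_sq']
  field_simp
  ring

lemma calF_one_two {ψ : ℝ} (hψ : ψ ≤ π / 4) : calF 1 2 ψ = sin ψ * cos ψ / 2 := by
  rw [calF_two_eq_integral_sq 1 hψ]
  simp only [Nat.cast_one, one_mul, integral_cos_mul_sq_add_mul_cos]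
  field_simp

lemma calF_two_two {ψ : ℝ} (hψ : ψ ≤ π / 4) : calF 2 2 ψ = sin ψ ^ 2 / 8 := by
  rw [calF_two_eq_integral_sq 2 hψ]
  simp only [Nat.cast_ofNat, integral_cos_two_mul_sq_add_mul_cos]
  field_simp
  ring

section TrigBigO

variable {l : Filter ℝ}

lemma sin_isBigO_self : sin =O[l] fun x => x :=
  isBigO_of_le l fun x => by simpa using abs_sin_le_abs

lemma sin_sub_self_isBigO_pow_three : (fun x => sin x - x) =O[l] (· ^ 3) :=
  isBigO_of_le' (c := 6⁻¹) l fun x => by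
    simpa [abs_sub_comm, div_eq_inv_mul] using abs_sub_sin_le x

lemma sin_mul_cos_sub_self_isBigO_pow_three : (fun x => sin x * cos x - x) =O[l] (· ^ 3) :=
  isBigO_of_le' (c := 2 / 3) l fun x => by
    simp only [Real.norm_eq_abs, abs_pow]
    calc |sin x * cos x - x| = |2 * x - sin (2 * x)| / 2 := by
          rw [sin_two_mul, show 2 * x - 2 * sin x * cos x = -(2 * (sin x * cos x - x)) by ring,
            abs_neg, abs_mul]
          norm_num
      _ ≤ |2 * x| ^ 3 / 6 / 2 := by gcongr; exact abs_sub_sin_le _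
      _ = 2 / 3 * |x| ^ 3 := by rw [abs_mul]; norm_num; ring

lemma inv_one_sub_sin_sq_div_two_isBigO_one :
    (fun x => (1 - sin x ^ 2 / 2)⁻¹) =O[l] (fun _ => (1 : ℝ)) :=
  isBigO_of_le' (c := 2) l fun x => by
    have h : 1 / 2 ≤ 1 - sin x ^ 2 / 2 := by linarith [sin_sq_le_one x]
    rw [norm_inv, Real.norm_of_nonneg (by linarith), norm_one, mul_one]
    exact inv_le_of_inv_le₀ (by norm_num) (by simpa using h)

end TrigBigO

lemma uFun_sub_self_eq {ψ : ℝ} (hψ : ψ ≤ π / 4) :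
    uFun ψ - ψ = (sin ψ * cos ψ - ψ + 2⁻¹ * (ψ * sin ψ ^ 2)) * (1 - sin ψ ^ 2 / 2)⁻¹ := by
  have hD : 2 - sin ψ ^ 2 ≠ 0 := by nlinarith [sin_sq_le_one ψ]
  rw [uFun, calF_one_two hψ, calF_zero_two hψ]
  field_simp
  ring

lemma Yfun_sub_eq {ψ : ℝ} (hψ : ψ ≤ π / 4) :
    Yfun ψ - (1 / 2 + ψ ^ 2 / 8) =
      8⁻¹ * ((sin ψ - ψ) * (sin ψ + ψ) + 2⁻¹ * (ψ ^ 2 * sin ψ ^ 2)) * (1 - sin ψ ^ 2 / 2)⁻¹ := by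
  have hD : 2 - sin ψ ^ 2 ≠ 0 := by nlinarith [sin_sq_le_one ψ]
  rw [Yfun, calF_two_two hψ, calF_zero_two hψ]
  field_simp
  ring

lemma uFun_sub_self_isBigO : (fun ψ => uFun ψ - ψ) =O[𝓝 0] (· ^ 3) := by
  have hcubic : (fun ψ => ψ * sin ψ ^ 2) =O[𝓝 0] (· ^ 3) :=
    ((isBigO_refl _ _).mul (sin_isBigO_self.pow 2)).congr_right fun x => by ring
  have hnum := sin_mul_cos_sub_self_isBigO_pow_three.add (hcubic.const_mul_left 2⁻¹)
  refine (hnum.mul inv_one_sub_sin_sq_div_two_isBigO_one).congr' ?_ (by simp)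
  filter_upwards [Iic_mem_nhds (by positivity : (0 : ℝ) < π / 4)] with ψ hψ
  exact (uFun_sub_self_eq hψ).symm

lemma Yfun_sub_isBigO : (fun ψ => Yfun ψ - (1 / 2 + ψ ^ 2 / 8)) =O[𝓝 0] (· ^ 4) := by
  have hsq_sub_sq : (fun ψ => (sin ψ - ψ) * (sin ψ + ψ)) =O[𝓝 0] (· ^ 4) :=
    (sin_sub_self_isBigO_pow_three.mul (sin_isBigO_self.add (isBigO_refl _ _))).congr_right
      fun x => by ring
  have hquartic : (fun ψ => ψ ^ 2 * sin ψ ^ 2) =O[𝓝 0] (· ^ 4) :=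
    ((isBigO_refl _ _).mul (sin_isBigO_self.pow 2)).congr_right fun x => by ring
  have hnum := (hsq_sub_sq.add (hquartic.const_mul_left 2⁻¹)).const_mul_left 8⁻¹
  refine (hnum.mul inv_one_sub_sin_sq_div_two_isBigO_one).congr' ?_ (by simp)
  filter_upwards [Iic_mem_nhds (by positivity : (0 : ℝ) < π / 4)] with ψ hψ
  exact (Yfun_sub_eq hψ).symm

/-- As `ψ → 0⁺`: `𝓕₁²/𝓕₀² = ψ + O(ψ³)` and `(𝓕₀²+𝓕₂²)/(2𝓕₀²) = 1/2 + ψ²/8 + O(ψ⁴)`. -/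
theorem calF_ratio_expansion_at_zero :
    ((fun ψ => calF 1 2 ψ / calF 0 2 ψ - ψ) =O[nhdsWithin 0 (Set.Ioi 0)]
      fun ψ => ψ ^ 3) ∧
    ((fun ψ => (calF 0 2 ψ + calF 2 2 ψ) / (2 * calF 0 2 ψ) - (1 / 2 + ψ ^ 2 / 8))
      =O[nhdsWithin 0 (Set.Ioi 0)] fun ψ => ψ ^ 4) :=
  ⟨uFun_sub_self_isBigO.mono nhdsWithin_le_nhds, Yfun_sub_isBigO.mono nhdsWithin_le_nhds⟩
end
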